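/- Let σ : Fin n → Fin 4 be a Pauli string on n qubits with num_Y(σ) even, let h : Matrix (Fin (2^n)) (Fin (2^n)) ℂ be a matrix all of whose entries are real (i.e., (h i j).im = 0 for all i, j), and let ψ : Fin (2^n) → ℝ be a real vector regarded as complex via coercion. Then the imaginary part of ∑ i j, (ψ i) * ((P(σ) * h) i j) * (ψ j) is zero. (This is the vanishing b_I = -2 Im⟨ψ| σ_I h |ψ⟩ = 0 for even-Y Pauli operators, a real Hamiltonian term h, and a real state.) -/
import Mathlib


open Finset

/-- The single-qubit Pauli matrices `I, X, Y, Z`, indexed by `Fin 4`. -/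
def pauliMat : Fin 4 → Matrix (Fin 2) (Fin 2) ℂ
  | 0 => !![1, 0; 0, 1]
  | 1 => !![0, 1; 1, 0]
  | 2 => !![0, -Complex.I; Complex.I, 0]
  | 3 => !![1, 0; 0, -1]

/-- The `k`-th binary digit of an index `i < 2 ^ n`. -/
def qbit {n : ℕ} (i : Fin (2 ^ n)) (k : Fin n) : Fin 2 :=
  ⟨(i : ℕ) / 2 ^ (k : ℕ) % 2, Nat.mod_lt _ (by norm_num)⟩

/-- The matrix of a Pauli string `σ : Fin n → Fin 4`: the `n`-fold Kronecker product of the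
single-qubit Pauli matrices chosen by `σ`, written entrywise in binary indexing. -/
def pauliString {n : ℕ} (σ : Fin n → Fin 4) : Matrix (Fin (2 ^ n)) (Fin (2 ^ n)) ℂ :=
  Matrix.of fun i j => ∏ k : Fin n, pauliMat (σ k) (qbit i k) (qbit j k)

/-- The number of `Y` operators in a Pauli string. -/
def numY {n : ℕ} (σ : Fin n → Fin 4) : ℕ :=
  (Finset.univ.filter fun i => σ i = 2).card

lemma conj_pauliMat (m : Fin 4) (a b : Fin 2) :
    (starRingEnd ℂ) (pauliMat m a b) = (if m = 2 then -1 else 1) * pauliMat m a b := by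
  fin_cases m <;> fin_cases a <;> fin_cases b <;>
    simp [pauliMat, Complex.ext_iff]

lemma pauliString_im_eq_zero {n : ℕ} (σ : Fin n → Fin 4) (hσ : Even (numY σ))
    (i j : Fin (2 ^ n)) : (pauliString σ i j).im = 0 := by
  rw [← Complex.conj_eq_iff_im]
  have : (starRingEnd ℂ) (pauliString σ i j)
      = (∏ k : Fin n, (if σ k = 2 then (-1 : ℂ) else 1)) * pauliString σ i j := by
    simp only [pauliString, Matrix.of_apply, map_prod, conj_pauliMat, Finset.prod_mul_distrib]
  rw [this]
  have : (∏ k : Fin n, (if σ k = 2 then (-1 : ℂ) else 1)) = 1 := by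
    rw [Finset.prod_ite, Finset.prod_const, Finset.prod_const, one_pow, mul_one]
    rcases hσ with ⟨c, hc⟩
    rw [show (Finset.univ.filter fun k => σ k = 2).card = numY σ from rfl, hc, ← two_mul,
      pow_mul]
    norm_num
  rw [this, one_mul]

/-- **Vanishing of `b_I` for even-`Y` Pauli strings, real Hamiltonian terms and real states.**
For a Pauli string `σ` with an even number of `Y`'s, a matrix `h` with real entries, and a
real state `ψ`, the imaginary part of `⟨ψ| P(σ) h |ψ⟩` vanishes. -/
theorem im_quadratic_form_eq_zero_of_even
    {n : ℕ} (σ : Fin n → Fin 4) (hσ : Even (numY σ))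
    (h : Matrix (Fin (2 ^ n)) (Fin (2 ^ n)) ℂ) (hreal : ∀ i j, (h i j).im = 0)
    (ψ : Fin (2 ^ n) → ℝ) :
    (∑ i, ∑ j, (ψ i : ℂ) * ((pauliString σ * h) i j) * (ψ j)).im = 0 := by
  rw [Complex.im_sum]
  refine Finset.sum_eq_zero fun i _ => ?_
  rw [Complex.im_sum]
  refine Finset.sum_eq_zero fun j _ => ?_
  have hP : ((pauliString σ * h) i j).im = 0 := by
    rw [Matrix.mul_apply, Complex.im_sum]
    refine Finset.sum_eq_zero fun k _ => ?_
    rw [Complex.mul_im, pauliString_im_eq_zero σ hσ, hreal]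
    ring
  rw [Complex.mul_im, Complex.mul_im, hP, Complex.ofReal_im, Complex.ofReal_im]
  ring
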